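/- (Necessity part of Theorem 8.1.) Let F : ℝ⁵ → ℝ be smooth and U ⊆ ℝ⁵ open. Suppose there exist a smooth nowhere-vanishing function g : U → ℝ with X_F(g) = (g/4)·∂₃F and a smooth function b : U → ℝ such that on U: 5·b = −g·V(K₂) and 15·X_F(b) = g·V'(K₂). Then 4·V'(K₂) + 3·V(X_F(K₂)) = 0 on U. (The two displayed equations arise by evaluating the totally geodesic connection equation on the null directions; their compatibility is the new point invariant condition of Theorem 8.1 for fourth order ODEs.) -/

import Mathlib

/-- Partial derivative in the `i`-th coordinate direction on `ℝⁿ = (Fin n → ℝ)`. -/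
noncomputable def pd {n : ℕ} (i : Fin n) (f : (Fin n → ℝ) → ℝ) : (Fin n → ℝ) → ℝ :=
  fun x => fderiv ℝ f x (Pi.single i 1)

namespace Order4

/- Coordinates on `ℝ⁵` are `(t, x₀, x₁, x₂, x₃)`: `∂_t = pd 0`, `∂₀ = pd 1`, `∂₁ = pd 2`,
`∂₂ = pd 3`, `∂₃ = pd 4`, and `x₁ = p 2`, `x₂ = p 3`, `x₃ = p 4`. -/

/-- Total derivative `X_F = ∂_t + x₁·∂₀ + x₂·∂₁ + x₃·∂₂ + F·∂₃` of `x'''' = F`. -/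
noncomputable def XF (F : (Fin 5 → ℝ) → ℝ) (u : (Fin 5 → ℝ) → ℝ) : (Fin 5 → ℝ) → ℝ :=
  fun p => pd 0 u p + p 2 * pd 1 u p + p 3 * pd 2 u p + p 4 * pd 3 u p + F p * pd 4 u p

/-- The curvature `K₀` of a fourth order ODE. -/
noncomputable def K0 (F : (Fin 5 → ℝ) → ℝ) : (Fin 5 → ℝ) → ℝ := fun p =>
  -(pd 1 F p) + XF F (pd 2 F) p - XF F (XF F (pd 3 F)) p
    + (3/4) * XF F (XF F (XF F (pd 4 F))) p
    - (9/16) * (XF F (pd 4 F) p)^2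
    + (9/32) * XF F (pd 4 F) p * (pd 4 F p)^2
    - (3/256) * (pd 4 F p)^4
    - (1/4) * pd 2 F p * pd 4 F p
    + (1/2) * XF F (pd 3 F) p * pd 4 F p
    - (3/4) * XF F (XF F (pd 4 F)) p * pd 4 F p
    + (1/4) * XF F (pd 4 F) p * pd 3 F p
    - (1/16) * pd 3 F p * (pd 4 F p)^2

/-- The curvature `K₁` of a fourth order ODE. -/
noncomputable def K1 (F : (Fin 5 → ℝ) → ℝ) : (Fin 5 → ℝ) → ℝ := fun p =>
  -(pd 2 F p) + 2 * XF F (pd 3 F) p - 2 * XF F (XF F (pd 4 F)) p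
    - (1/2) * pd 3 F p * pd 4 F p
    + (3/2) * XF F (pd 4 F) p * pd 4 F p
    - (1/8) * (pd 4 F p)^3

/-- The curvature `K₂ = −∂₂F + (3/2)X_F(∂₃F) − (3/8)(∂₃F)²` of a fourth order ODE. -/
noncomputable def K2 (F : (Fin 5 → ℝ) → ℝ) : (Fin 5 → ℝ) → ℝ := fun p =>
  -(pd 3 F p) + (3/2) * XF F (pd 4 F) p - (3/8) * (pd 4 F p)^2

/-- The operator `V = ∂₃`. -/
noncomputable def V (u : (Fin 5 → ℝ) → ℝ) : (Fin 5 → ℝ) → ℝ := pd 4 u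

/-- The operator `V' = −∂₂ − (3/4)∂₃F·∂₃`. -/
noncomputable def V' (F : (Fin 5 → ℝ) → ℝ) (u : (Fin 5 → ℝ) → ℝ) : (Fin 5 → ℝ) → ℝ :=
  fun p => -(pd 3 u p) - (3/4) * pd 4 F p * pd 4 u p

end Order4


section CartanAux
open Order4

variable {n : ℕ}

lemma contDiff_pd (i : Fin n) {f : (Fin n → ℝ) → ℝ} (hf : ContDiff ℝ (⊤ : ℕ∞) f) :
    ContDiff ℝ (⊤ : ℕ∞) (pd i f) :=
  (hf.fderiv_right ((by simp))).clm_apply contDiff_const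

lemma contDiff_coord (i : Fin n) : ContDiff ℝ (⊤ : ℕ∞) (fun q : Fin n → ℝ => q i) :=
  (ContinuousLinearMap.proj (R := ℝ) (φ := fun _ : Fin n => ℝ) i).contDiff

lemma pd_add (i : Fin n) {f g : (Fin n → ℝ) → ℝ} {x} (hf : DifferentiableAt ℝ f x)
    (hg : DifferentiableAt ℝ g x) :
    pd i (fun y => f y + g y) x = pd i f x + pd i g x := by
  simp [pd, fderiv_fun_add hf hg]

lemma pd_mul (i : Fin n) {f g : (Fin n → ℝ) → ℝ} {x} (hf : DifferentiableAt ℝ f x)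
    (hg : DifferentiableAt ℝ g x) :
    pd i (fun y => f y * g y) x = pd i f x * g x + f x * pd i g x := by
  simp [pd, fderiv_fun_mul hf hg]; ring

lemma pd_const_mul (i : Fin n) (c : ℝ) {f : (Fin n → ℝ) → ℝ} {x} (hf : DifferentiableAt ℝ f x) :
    pd i (fun y => c * f y) x = c * pd i f x := by
  simp [pd, fderiv_const_mul hf c]

lemma pd_coord (j i : Fin n) (x : Fin n → ℝ) :
    pd j (fun q : Fin n → ℝ => q i) x = (Pi.single j 1 : Fin n → ℝ) i := by
  have h : (fun q : Fin n → ℝ => q i) = fun q => (ContinuousLinearMap.proj (R := ℝ)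
      (φ := fun _ : Fin n => ℝ) i) q := rfl
  rw [pd, h, ContinuousLinearMap.fderiv]
  rfl

lemma pd_comm {f : (Fin n → ℝ) → ℝ} (hf : ContDiff ℝ (⊤ : ℕ∞) f) (i j : Fin n) (x : Fin n → ℝ) :
    pd i (pd j f) x = pd j (pd i f) x := by
  have hsymm : IsSymmSndFDerivAt ℝ f x := hf.contDiffAt.isSymmSndFDerivAt (by
    simp [minSmoothness_of_isRCLikeNormedField]; exact WithTop.coe_le_coe.mpr (le_top : (2:ℕ∞) ≤ ⊤))
  have key : ∀ a b : Fin n, pd a (pd b f) x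
      = fderiv ℝ (fderiv ℝ f) x (Pi.single a 1) (Pi.single b 1) := by
    intro a b
    have h1 : pd b f = fun y =>
        (ContinuousLinearMap.apply ℝ ℝ (Pi.single b 1 : Fin n → ℝ)) (fderiv ℝ f y) := rfl
    have hdiff : DifferentiableAt ℝ (fderiv ℝ f) x :=
      ((hf.fderiv_right (m := 1) (WithTop.coe_le_coe.mpr le_top)).differentiable one_ne_zero).differentiableAt
    rw [pd, h1, fderiv_clm_apply (differentiableAt_const _) hdiff]
    simp
  rw [key, key, hsymm]

lemma pd_congr {f g : (Fin n → ℝ) → ℝ} {x : Fin n → ℝ} (h : f =ᶠ[nhds x] g) (i : Fin n) :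
    pd i f x = pd i g x := by
  rw [pd, pd, h.fderiv_eq]

lemma contDiff_XF {F u : (Fin 5 → ℝ) → ℝ} (hF : ContDiff ℝ (⊤ : ℕ∞) F) (hu : ContDiff ℝ (⊤ : ℕ∞) u) :
    ContDiff ℝ (⊤ : ℕ∞) (XF F u) := by
  unfold XF
  exact ((((contDiff_pd 0 hu).add ((contDiff_coord 2).mul (contDiff_pd 1 hu))).add
    ((contDiff_coord 3).mul (contDiff_pd 2 hu))).add
    ((contDiff_coord 4).mul (contDiff_pd 3 hu))).add (hF.mul (contDiff_pd 4 hu))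

lemma contDiff_K2 {F : (Fin 5 → ℝ) → ℝ} (hF : ContDiff ℝ (⊤ : ℕ∞) F) : ContDiff ℝ (⊤ : ℕ∞) (K2 F) := by
  unfold K2
  exact ((contDiff_pd 3 hF).neg.add
    (contDiff_const.mul (contDiff_XF hF (contDiff_pd 4 hF)))).sub
    (contDiff_const.mul ((contDiff_pd 4 hF).pow 2))

/-- Commutator identity: `∂₃(X_F u) = X_F(∂₃ u) + ∂₂ u + ∂₃F·∂₃ u`. -/
lemma pd4_XF {F u : (Fin 5 → ℝ) → ℝ} (hF : ContDiff ℝ (⊤ : ℕ∞) F) (hu : ContDiff ℝ (⊤ : ℕ∞) u)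
    (x : Fin 5 → ℝ) :
    pd 4 (XF F u) x = XF F (pd 4 u) x + pd 3 u x + pd 4 F x * pd 4 u x := by
  have d0 : DifferentiableAt ℝ (pd (0 : Fin 5) u) x :=
    ((contDiff_pd 0 hu).differentiable (by simp)).differentiableAt
  have d1 : DifferentiableAt ℝ (pd (1 : Fin 5) u) x :=
    ((contDiff_pd 1 hu).differentiable (by simp)).differentiableAt
  have d2 : DifferentiableAt ℝ (pd (2 : Fin 5) u) x :=
    ((contDiff_pd 2 hu).differentiable (by simp)).differentiableAt
  have d3 : DifferentiableAt ℝ (pd (3 : Fin 5) u) x :=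
    ((contDiff_pd 3 hu).differentiable (by simp)).differentiableAt
  have d4 : DifferentiableAt ℝ (pd (4 : Fin 5) u) x :=
    ((contDiff_pd 4 hu).differentiable (by simp)).differentiableAt
  have dF : DifferentiableAt ℝ F x := (hF.differentiable (by simp)).differentiableAt
  have dc : ∀ i : Fin 5, DifferentiableAt ℝ (fun q : Fin 5 → ℝ => q i) x := fun i =>
    (((contDiff_coord i).differentiable (by simp))).differentiableAt
  have t2 : DifferentiableAt ℝ (fun q : Fin 5 → ℝ => q 2 * pd 1 u q) x := (dc 2).mul d1
  have t3 : DifferentiableAt ℝ (fun q : Fin 5 → ℝ => q 3 * pd 2 u q) x := (dc 3).mul d2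
  have t4 : DifferentiableAt ℝ (fun q : Fin 5 → ℝ => q 4 * pd 3 u q) x := (dc 4).mul d3
  have tF : DifferentiableAt ℝ (fun q : Fin 5 → ℝ => F q * pd 4 u q) x := dF.mul d4
  have hXF : XF F u = fun q => pd 0 u q + q 2 * pd 1 u q + q 3 * pd 2 u q + q 4 * pd 3 u q
      + F q * pd 4 u q := rfl
  rw [hXF]
  rw [pd_add 4 (((d0.fun_add t2).fun_add t3).fun_add t4) tF,
      pd_add 4 ((d0.fun_add t2).fun_add t3) t4,
      pd_add 4 (d0.fun_add t2) t3,
      pd_add 4 d0 t2,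
      pd_mul 4 (dc 2) d1, pd_mul 4 (dc 3) d2, pd_mul 4 (dc 4) d3, pd_mul 4 dF d4,
      pd_coord 4 2, pd_coord 4 3, pd_coord 4 4,
      pd_comm hu 4 1, pd_comm hu 4 2, pd_comm hu 4 3, pd_comm hu 4 0]
  have h44 : pd 4 (pd 4 u) x = pd 4 (pd 4 u) x := rfl
  simp [XF, Pi.single_apply]
  ring

end CartanAux

open Order4 in
/-- necessity part of Theorem 8.1: if there exist a nowhere-vanishing
solution `g` of `X_F(g) = (g/4)·∂₃F` and a function `b` with `5b = −g·V(K₂)` and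
`15X_F(b) = g·V'(K₂)` on `U`, then the condition `4V'(K₂) + 3V(X_F(K₂)) = 0`
holds on `U`. -/
theorem cartan_condition_order4 (F : (Fin 5 → ℝ) → ℝ) (hF : ContDiff ℝ (⊤ : ℕ∞) F)
    (U : Set (Fin 5 → ℝ)) (hU : IsOpen U)
    (g : (Fin 5 → ℝ) → ℝ) (hg : ContDiffOn ℝ (⊤ : ℕ∞) g U)
    (hg0 : ∀ p ∈ U, g p ≠ 0)
    (hgeq : ∀ p ∈ U, XF F g p = (g p / 4) * pd 4 F p)
    (b : (Fin 5 → ℝ) → ℝ) (hb : ContDiffOn ℝ (⊤ : ℕ∞) b U)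
    (heq1 : ∀ p ∈ U, 5 * b p = -(g p * V (K2 F) p))
    (heq2 : ∀ p ∈ U, 15 * XF F b p = g p * V' F (K2 F) p) :
    ∀ p ∈ U, 4 * V' F (K2 F) p + 3 * V (XF F (K2 F)) p = 0 := by
  intro p hp
  set A : (Fin 5 → ℝ) → ℝ := pd 4 (K2 F) with hAdef
  have hK2 : ContDiff ℝ (⊤ : ℕ∞) (K2 F) := contDiff_K2 hF
  have hA : ContDiff ℝ (⊤ : ℕ∞) A := contDiff_pd 4 hK2
  have dA : DifferentiableAt ℝ A p := (hA.differentiable (by simp)).differentiableAt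
  have dg : DifferentiableAt ℝ g p :=
    (hg.contDiffAt (hU.mem_nhds hp)).differentiableAt (by simp)
  have dgA : DifferentiableAt ℝ (fun q => g q * A q) p := dg.mul dA
  -- local formula for b
  have hbloc : b =ᶠ[nhds p] fun q => (-1/5) * (g q * A q) := by
    filter_upwards [hU.mem_nhds hp] with q hq
    have := heq1 q hq
    have hVA : V (K2 F) q = A q := rfl
    rw [hVA] at this
    linarith
  have hXb : ∀ i : Fin 5, pd i b p = (-1/5) * (pd i g p * A p + g p * pd i A p) := by
    intro i
    rw [pd_congr hbloc i, pd_const_mul i _ dgA, pd_mul i dg dA]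
  -- compute XF F b p
  have hXFb : XF F b p = (-1/5) * (XF F g p * A p + g p * XF F A p) := by
    show pd 0 b p + p 2 * pd 1 b p + p 3 * pd 2 b p + p 4 * pd 3 b p + F p * pd 4 b p
      = (-1/5) * ((pd 0 g p + p 2 * pd 1 g p + p 3 * pd 2 g p + p 4 * pd 3 g p
          + F p * pd 4 g p) * A p
        + g p * (pd 0 A p + p 2 * pd 1 A p + p 3 * pd 2 A p + p 4 * pd 3 A p
          + F p * pd 4 A p))
    rw [hXb 0, hXb 1, hXb 2, hXb 3, hXb 4]
    ring
  -- derive the key relation by cancelling g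
  have hstar : V' F (K2 F) p = -(3/4) * pd 4 F p * A p - 3 * XF F A p := by
    have h2 := heq2 p hp
    rw [hXFb, hgeq p hp] at h2
    have hcancel : g p * V' F (K2 F) p
        = g p * (-(3/4) * pd 4 F p * A p - 3 * XF F A p) := by
      rw [← h2]; ring
    exact mul_left_cancel₀ (hg0 p hp) hcancel
  -- commutator identity
  have hcomm : pd 4 (XF F (K2 F)) p
      = XF F A p + pd 3 (K2 F) p + pd 4 F p * A p := pd4_XF hF hK2 p
  have hV : V (XF F (K2 F)) p = pd 4 (XF F (K2 F)) p := rfl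
  have hV' : V' F (K2 F) p = -(pd 3 (K2 F) p) - (3/4) * pd 4 F p * A p := rfl
  rw [hV, hcomm, hV']
  rw [hV'] at hstar
  linarith
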